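/- arXiv:1810.08364 — 2 statements merged into one kernel-verified Lean document; each statement's English description precedes it below -/
import Mathlib

section
/- For every real ρ > 0, the tail of the Yule–Simon distribution with parameter ρ satisfies ∑_{k=n+1}^∞ ρ·B(k, ρ+1) ~ Γ(ρ+1)·n^{−ρ} as n → ∞; that is, lim_{n→∞} n^{ρ} · ∑_{k=n+1}^∞ ρ·B(k, ρ+1) = Γ(ρ+1). -/
open Filter

/-- The Beta function `B(a,b) = Γ(a)Γ(b)/Γ(a+b)`. -/
noncomputable def betaFn (a b : ℝ) : ℝ := Real.Gamma a * Real.Gamma b / Real.Gamma (a + b)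

private noncomputable def gAux (ρ : ℝ) (m : ℕ) : ℝ :=
  Real.Gamma (ρ + 1) * Real.Gamma ((m : ℝ) + 1) / Real.Gamma ((m : ℝ) + ρ + 1)

private lemma gAux_step (ρ : ℝ) (hρ : 0 < ρ) (m : ℕ) :
    ρ * betaFn ((m + 1 : ℕ) : ℝ) (ρ + 1) = gAux ρ m - gAux ρ (m + 1) := by
  have hm1 : (0:ℝ) < (m : ℝ) + 1 := by positivity
  have hmr : (0:ℝ) < (m : ℝ) + ρ + 1 := by positivity
  have hB : (0:ℝ) < Real.Gamma ((m : ℝ) + 1) := Real.Gamma_pos_of_pos hm1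
  have hC : (0:ℝ) < Real.Gamma ((m : ℝ) + ρ + 1) := Real.Gamma_pos_of_pos hmr
  have h1 : Real.Gamma (((m + 1 : ℕ) : ℝ) + (ρ + 1))
      = ((m : ℝ) + ρ + 1) * Real.Gamma ((m : ℝ) + ρ + 1) := by
    rw [show (((m + 1 : ℕ) : ℝ) + (ρ + 1)) = ((m : ℝ) + ρ + 1) + 1 by push_cast; ring]
    exact Real.Gamma_add_one hmr.ne'
  have h2 : Real.Gamma (((m + 1 : ℕ) : ℝ) + 1)
      = ((m : ℝ) + 1) * Real.Gamma ((m : ℝ) + 1) := by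
    rw [show (((m + 1 : ℕ) : ℝ) + 1) = ((m : ℝ) + 1) + 1 by push_cast; ring]
    exact Real.Gamma_add_one hm1.ne'
  have h3 : ((m + 1 : ℕ) : ℝ) + ρ + 1 = ((m : ℝ) + ρ + 1) + 1 := by push_cast; ring
  have h4 : Real.Gamma (((m + 1 : ℕ) : ℝ) + ρ + 1)
      = ((m : ℝ) + ρ + 1) * Real.Gamma ((m : ℝ) + ρ + 1) := by
    rw [h3]; exact Real.Gamma_add_one hmr.ne'
  have h5 : ((m + 1 : ℕ) : ℝ) = (m : ℝ) + 1 := by push_cast; ring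
  rw [betaFn, gAux, gAux, h1, h2, h4, h5]
  field_simp
  ring

private lemma prodAux (ρ : ℝ) (hρ : 0 < ρ) (n : ℕ) :
    ∏ j ∈ Finset.range (n + 1), (ρ + (j : ℝ)) = Real.Gamma (ρ + n + 1) / Real.Gamma ρ := by
  induction n with
  | zero =>
    simp only [zero_add, Finset.prod_range_one, Nat.cast_zero, add_zero]
    rw [Real.Gamma_add_one hρ.ne']
    field_simp [(Real.Gamma_pos_of_pos hρ).ne']
  | succ n ih =>
    rw [Finset.prod_range_succ, ih]
    have h : Real.Gamma (ρ + (n + 1 : ℕ) + 1) = (ρ + (n + 1 : ℕ)) * Real.Gamma (ρ + n + 1) := by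
      rw [show ρ + ((n + 1 : ℕ) : ℝ) + 1 = (ρ + n + 1) + 1 by push_cast; ring]
      rw [Real.Gamma_add_one (by positivity : (ρ + (n:ℝ) + 1) ≠ 0)]
      push_cast; ring
    rw [h]
    field_simp

private lemma key_tendsto (ρ : ℝ) (hρ : 0 < ρ) :
    Tendsto (fun n : ℕ => (n : ℝ) ^ ρ * gAux ρ n) atTop (nhds (Real.Gamma (ρ + 1))) := by
  have h := (Real.GammaSeq_tendsto_Gamma ρ).const_mul ρ
  have heq : ∀ n : ℕ, ρ * Real.GammaSeq ρ n = (n : ℝ) ^ ρ * gAux ρ n := by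
    intro n
    rw [Real.GammaSeq, prodAux ρ hρ n, gAux]
    have hΓρ : (0:ℝ) < Real.Gamma ρ := Real.Gamma_pos_of_pos hρ
    have hΓn : Real.Gamma ((n : ℝ) + 1) = (n.factorial : ℝ) := by
      exact_mod_cast Real.Gamma_nat_eq_factorial n
    have hΓ1 : Real.Gamma (ρ + 1) = ρ * Real.Gamma ρ := Real.Gamma_add_one hρ.ne'
    have hab : Real.Gamma ((n:ℝ) + ρ + 1) = Real.Gamma (ρ + (n:ℝ) + 1) := by ring_nf
    have hΓnr : (0:ℝ) < Real.Gamma (ρ + (n:ℝ) + 1) := Real.Gamma_pos_of_pos (by positivity)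
    rw [hΓn, hΓ1, hab]
    field_simp
  rw [show Real.Gamma (ρ + 1) = ρ * Real.Gamma ρ from Real.Gamma_add_one hρ.ne']
  exact h.congr heq

/-- For `ρ > 0`, the tail of the Yule–Simon distribution with parameter `ρ` satisfies
`∑_{k=n+1}^∞ ρ·B(k, ρ+1) ~ Γ(ρ+1)·n^{−ρ}` as `n → ∞`, i.e.
`lim_{n→∞} n^ρ · ∑_{k>n} ρ·B(k, ρ+1) = Γ(ρ+1)`. -/
theorem yuleSimon_tail_asymptotic (ρ : ℝ) (hρ : 0 < ρ) :
    Tendsto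
      (fun n : ℕ => (n : ℝ) ^ ρ * ∑' k : ℕ, ρ * betaFn ((n + 1 + k : ℕ) : ℝ) (ρ + 1))
      atTop (nhds (Real.Gamma (ρ + 1))) := by
  -- g tends to 0
  have hg0 : Tendsto (fun n : ℕ => gAux ρ n) atTop (nhds 0) := by
    have h1 := key_tendsto ρ hρ
    have h2 : Tendsto (fun n : ℕ => (n : ℝ) ^ (-ρ)) atTop (nhds 0) :=
      (tendsto_rpow_neg_atTop hρ).comp tendsto_natCast_atTop_atTop
    have := h1.mul h2
    rw [mul_zero] at this
    refine this.congr' ?_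
    filter_upwards [eventually_gt_atTop 0] with n hn
    have hn' : (0:ℝ) < (n:ℝ) := by exact_mod_cast hn
    rw [mul_assoc, mul_comm (gAux ρ n), ← mul_assoc, ← Real.rpow_add hn', add_neg_cancel,
      Real.rpow_zero, one_mul]
  -- nonneg terms
  have hnonneg : ∀ m : ℕ, 0 ≤ ρ * betaFn ((m + 1 : ℕ) : ℝ) (ρ + 1) := by
    intro m
    have hb : 0 < betaFn ((m + 1 : ℕ) : ℝ) (ρ + 1) := by
      rw [betaFn]
      have h1 : (0:ℝ) < ((m + 1 : ℕ) : ℝ) := by positivity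
      exact div_pos (mul_pos (Real.Gamma_pos_of_pos h1)
        (Real.Gamma_pos_of_pos (by positivity)))
        (Real.Gamma_pos_of_pos (by positivity))
    positivity
  -- tsum equals gAux
  have htsum : ∀ n : ℕ, (∑' k : ℕ, ρ * betaFn ((n + 1 + k : ℕ) : ℝ) (ρ + 1)) = gAux ρ n := by
    intro n
    have hhs : HasSum (fun k : ℕ => ρ * betaFn ((n + 1 + k : ℕ) : ℝ) (ρ + 1)) (gAux ρ n) := by
      rw [hasSum_iff_tendsto_nat_of_nonneg (fun k => by
        rw [show n + 1 + k = (n + k) + 1 by ring]; exact hnonneg (n + k))]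
      have hpart : ∀ N : ℕ, ∑ k ∈ Finset.range N, ρ * betaFn ((n + 1 + k : ℕ) : ℝ) (ρ + 1)
          = gAux ρ n - gAux ρ (n + N) := by
        intro N
        have := Finset.sum_range_sub' (fun k => gAux ρ (n + k)) N
        simp only [add_zero] at this
        rw [← this]
        refine Finset.sum_congr rfl fun k _ => ?_
        rw [show n + 1 + k = (n + k) + 1 by ring, gAux_step ρ hρ (n + k)]
        rfl
      simp only [hpart]
      have : Tendsto (fun N : ℕ => gAux ρ (n + N)) atTop (nhds 0) :=
        (hg0.comp (tendsto_add_atTop_nat n)).congr (fun N => by simp [Function.comp, Nat.add_comm])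
      simpa using (tendsto_const_nhds (x := gAux ρ n)).sub this
    exact hhs.tsum_eq
  simp only [htsum]
  exact key_tendsto ρ hρ
end

section
/- In Simon's reinforcement model with memory parameter p ∈ (0,1): for every γ ∈ (1, 1/p) there exist constants c = c(γ,p) > 0 and η = η(γ,p) ∈ (0,1) such that E[ N_j(n)^γ ] ≤ c·(n/j)^η for all integers 1 ≤ j ≤ n. -/
open MeasureTheory ProbabilityTheory Filter
open scoped ENNReal

/-- The index process of Simon's reinforcement model: `I_1 = 1` and, for `i ≥ 2`,
`I_i = i` if `ε_i = 0` and `I_i = I_{V_i}` if `ε_i = 1` (a.s. `V_i ∈ {1,…,i−1}`;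
the `min` below is the identity on that event and merely guarantees termination). -/
def simonIdx {Ω : Type*} (ε V : ℕ → Ω → ℕ) (ω : Ω) : ℕ → ℕ
  | 0 => 0
  | 1 => 1
  | i + 2 =>
      if ε (i + 2) ω = 0 then i + 2
      else simonIdx ε V ω (min (V (i + 2) ω) (i + 1))
  decreasing_by exact Nat.lt_succ_of_le (min_le_right _ _)

/-- The counting process `N_j(k) = card{1 ≤ i ≤ k : I_i = j}` of Simon's model. -/
def simonN {Ω : Type*} (ε V : ℕ → Ω → ℕ) (j k : ℕ) (ω : Ω) : ℕ :=
  ((Finset.Icc 1 k).filter (fun i => simonIdx ε V ω i = j)).card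

lemma simonIdx_le {Ω : Type*} (ε V : ℕ → Ω → ℕ) (ω : Ω) : ∀ i, simonIdx ε V ω i ≤ i := by
  intro i
  induction i using Nat.strong_induction_on with
  | _ i ih =>
    match i with
    | 0 => simp [simonIdx]
    | 1 => simp [simonIdx]
    | (n+2) =>
      rw [simonIdx]
      split
      · exact le_refl _
      · exact le_trans (le_trans (ih _ (Nat.lt_succ_of_le (min_le_right _ _)))
          (min_le_right _ _)) (by omega)

lemma simonIdx_congr {Ω Ω' : Type*} (ε V : ℕ → Ω → ℕ) (ε' V' : ℕ → Ω' → ℕ)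
    (ω : Ω) (ω' : Ω') (k : ℕ)
    (h : ∀ m, 2 ≤ m → m ≤ k → ε m ω = ε' m ω' ∧ V m ω = V' m ω') :
    ∀ i, i ≤ k → simonIdx ε V ω i = simonIdx ε' V' ω' i := by
  intro i
  induction i using Nat.strong_induction_on with
  | _ i ih =>
    match i with
    | 0 => intro _; simp [simonIdx]
    | 1 => intro _; simp [simonIdx]
    | (n+2) =>
      intro hik
      obtain ⟨he, hv⟩ := h (n+2) (by omega) hik
      rw [simonIdx, simonIdx, he, hv]
      split
      · rfl
      · exact ih _ (Nat.lt_succ_of_le (min_le_right _ _))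
          (le_trans (le_trans (min_le_right _ _) (by omega)) hik)

lemma simonN_congr {Ω Ω' : Type*} (ε V : ℕ → Ω → ℕ) (ε' V' : ℕ → Ω' → ℕ)
    (ω : Ω) (ω' : Ω') (j k : ℕ)
    (h : ∀ m, 2 ≤ m → m ≤ k → ε m ω = ε' m ω' ∧ V m ω = V' m ω') :
    simonN ε V j k ω = simonN ε' V' j k ω' := by
  unfold simonN
  congr 1
  apply Finset.filter_congr
  intro i hi
  rw [simonIdx_congr ε V ε' V' ω ω' k h i (Finset.mem_Icc.mp hi).2]

lemma measurable_simonIdx {Ω : Type*} [MeasurableSpace Ω] {ε V : ℕ → Ω → ℕ}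
    (hε : ∀ i, Measurable (ε i)) (hV : ∀ i, Measurable (V i)) :
    ∀ i, Measurable (fun ω => simonIdx ε V ω i) := by
  intro i
  induction i using Nat.strong_induction_on with
  | _ i ih =>
    match i with
    | 0 => simpa [simonIdx] using measurable_const
    | 1 => simpa [simonIdx] using measurable_const
    | (n+2) =>
      have hmin : Measurable (fun ω => min (V (n+2) ω) (n+1)) :=
        (hV (n+2)).min measurable_const
      have key : (fun ω => simonIdx ε V ω (min (V (n+2) ω) (n+1)))
          = fun ω => ∑ m ∈ Finset.range (n+2),
              if min (V (n+2) ω) (n+1) = m then simonIdx ε V ω m else 0 := by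
        funext ω
        rw [Finset.sum_ite_eq (Finset.range (n+2)) (min (V (n+2) ω) (n+1))
          (fun m => simonIdx ε V ω m), if_pos]
        exact Finset.mem_range.mpr (Nat.lt_succ_of_le (min_le_right _ _))
      have h2 : Measurable (fun ω => simonIdx ε V ω (min (V (n+2) ω) (n+1))) := by
        rw [key]
        apply Finset.measurable_sum
        intro m hm
        exact Measurable.ite (hmin (measurableSet_singleton m))
          (ih m (Finset.mem_range.mp hm)) measurable_const
      have : (fun ω => simonIdx ε V ω (n+2))
          = fun ω => if ε (n+2) ω = 0 then (n+2 : ℕ)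
              else simonIdx ε V ω (min (V (n+2) ω) (n+1)) := by
        funext ω; rw [simonIdx]
      rw [this]
      exact Measurable.ite (hε (n+2) (measurableSet_singleton 0)) measurable_const h2

lemma measurable_simonN {Ω : Type*} [MeasurableSpace Ω] {ε V : ℕ → Ω → ℕ}
    (hε : ∀ i, Measurable (ε i)) (hV : ∀ i, Measurable (V i)) (j k : ℕ) :
    Measurable (fun ω => simonN ε V j k ω) := by
  have : (fun ω => simonN ε V j k ω)
      = fun ω => ∑ i ∈ Finset.Icc 1 k, if simonIdx ε V ω i = j then 1 else 0 := by
    funext ω; exact Finset.card_filter _ _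
  rw [this]
  apply Finset.measurable_sum
  intro i _
  exact Measurable.ite (measurable_simonIdx hε hV i (measurableSet_singleton j))
    measurable_const measurable_const

lemma simonN_le {Ω : Type*} (ε V : ℕ → Ω → ℕ) (j k : ℕ) (ω : Ω) :
    simonN ε V j k ω ≤ k := by
  calc ((Finset.Icc 1 k).filter (fun i => simonIdx ε V ω i = j)).card
      ≤ (Finset.Icc 1 k).card := Finset.card_filter_le _ _
    _ = k := by rw [Nat.card_Icc]; omega

lemma simonN_self_le_one {Ω : Type*} (ε V : ℕ → Ω → ℕ) (j : ℕ) (hj : 1 ≤ j) (ω : Ω) :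
    simonN ε V j j ω ≤ 1 := by
  have : ((Finset.Icc 1 j).filter (fun i => simonIdx ε V ω i = j)) ⊆ {j} := by
    intro i hi
    obtain ⟨hi1, hi2⟩ := Finset.mem_filter.mp hi
    have := simonIdx_le ε V ω i
    have := (Finset.mem_Icc.mp hi1).2
    simp only [Finset.mem_singleton]
    omega
  calc _ ≤ ({j} : Finset ℕ).card := Finset.card_le_card this
    _ = 1 := rfl

/-- The one-step evolution of the counting process, valid when `V (k+1) ω ∈ [1,k]`. -/
lemma simonN_succ {Ω : Type*} (ε V : ℕ → Ω → ℕ) (j k : ℕ) (hj : 1 ≤ j) (hk : j ≤ k)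
    (ω : Ω) (hV1 : 1 ≤ V (k+1) ω) (hV2 : V (k+1) ω ≤ k) :
    simonN ε V j (k+1) ω = simonN ε V j k ω +
      (if ε (k+1) ω ≠ 0 ∧ simonIdx ε V ω (V (k+1) ω) = j then 1 else 0) := by
  have hicc : Finset.Icc 1 (k+1) = insert (k+1) (Finset.Icc 1 k) := by
    ext x; simp only [Finset.mem_Icc, Finset.mem_insert]; omega
  have hnotmem : (k+1) ∉ Finset.Icc 1 k := by simp
  have hidx : simonIdx ε V ω (k+1) =
      if ε (k+1) ω = 0 then k+1 else simonIdx ε V ω (V (k+1) ω) := by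
    obtain ⟨k', rfl⟩ : ∃ k', k = k' + 1 := ⟨k - 1, by omega⟩
    have hle : V (k' + 2) ω ≤ k' + 1 := hV2
    rw [show k' + 1 + 1 = k' + 2 from rfl, simonIdx, min_eq_left hle]
  unfold simonN
  rw [hicc, Finset.filter_insert]
  by_cases hcase : ε (k+1) ω ≠ 0 ∧ simonIdx ε V ω (V (k+1) ω) = j
  · rw [if_pos, if_pos hcase, Finset.card_insert_of_notMem (fun h => hnotmem (Finset.mem_of_mem_filter _ h))]
    rw [hidx, if_neg hcase.1]
    exact hcase.2
  · rw [if_neg, if_neg hcase, add_zero]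
    rw [hidx]
    intro hcon
    by_cases he : ε (k+1) ω = 0
    · rw [if_pos he] at hcon; omega
    · rw [if_neg he] at hcon; exact hcase ⟨he, hcon⟩

lemma indep_step {Ω : Type*} [MeasurableSpace Ω] (P : Measure Ω) [IsProbabilityMeasure P]
    (ε V : ℕ → Ω → ℕ)
    (hεmeas : ∀ i, Measurable (ε i)) (hVmeas : ∀ i, Measurable (V i))
    (hindep : iIndepFun
      (fun (q : ℕ × Bool) ω => if q.2 then ε q.1 ω else V q.1 ω) P)
    (k v j : ℕ) (hk : 1 ≤ k) (hv : v ≤ k)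
    (F : ℕ → ℕ → ℝ) :
    ∫ ω, (if ε (k+1) ω = 1 ∧ V (k+1) ω = v then (1:ℝ) else 0)
        * F (simonIdx ε V ω v) (simonN ε V j k ω) ∂P
      = (P {ω | ε (k+1) ω = 1}).toReal * (P {ω | V (k+1) ω = v}).toReal
        * ∫ ω, F (simonIdx ε V ω v) (simonN ε V j k ω) ∂P := by
  classical
  set f : ℕ × Bool → Ω → ℕ := fun q ω => if q.2 then ε q.1 ω else V q.1 ω with hf
  have hfmeas : ∀ q, Measurable (f q) := by
    rintro ⟨i, b⟩
    cases b
    · simpa [hf] using hVmeas i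
    · simpa [hf] using hεmeas i
  set S : Finset (ℕ × Bool) := (Finset.Icc 2 k) ×ˢ (Finset.univ : Finset Bool) with hS
  set T : Finset (ℕ × Bool) := {(k+1, true), (k+1, false)} with hT
  have hST : Disjoint S T := by
    rw [Finset.disjoint_left]
    rintro ⟨i, b⟩ haS haT
    rw [hS, Finset.mem_product, Finset.mem_Icc] at haS
    rw [hT, Finset.mem_insert, Finset.mem_singleton] at haT
    rcases haT with h | h <;> (injection h with h1 h2; omega)
  have hIndep2 : IndepFun (fun ω (q : S) => f q ω) (fun ω (q : T) => f q ω) P :=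
    hindep.indepFun_finset S T hST hfmeas
  -- pure versions on the coordinate space
  set ε' : ℕ → (S → ℕ) → ℕ := fun m x => if h : (m, true) ∈ S then x ⟨(m,true), h⟩ else 0 with hε'
  set V' : ℕ → (S → ℕ) → ℕ := fun m x => if h : (m, false) ∈ S then x ⟨(m,false), h⟩ else 0 with hV'
  set H : (S → ℕ) → ℝ := fun x => F (simonIdx ε' V' x v) (simonN ε' V' j k x) with hH
  have hmemT1 : ((k+1, true) : ℕ × Bool) ∈ T := by simp [hT]
  have hmemT2 : ((k+1, false) : ℕ × Bool) ∈ T := by simp [hT]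
  set G : (T → ℕ) → ℝ := fun y =>
    if y ⟨(k+1,true), hmemT1⟩ = 1 ∧ y ⟨(k+1,false), hmemT2⟩ = v then 1 else 0 with hG
  have hHmeas : Measurable H := measurable_of_countable _
  have hGmeas : Measurable G := measurable_of_countable _
  have hcomp : IndepFun (fun ω => H (fun q : S => f q ω)) (fun ω => G (fun q : T => f q ω)) P :=
    hIndep2.comp hHmeas hGmeas
  -- identify the composites
  have hcond : ∀ ω : Ω, ∀ m, 2 ≤ m → m ≤ k →
      ε' m (fun q : S => f q ω) = ε m ω ∧ V' m (fun q : S => f q ω) = V m ω := by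
    intro ω m hm2 hmk
    have hmemE : ((m, true) : ℕ × Bool) ∈ S := by
      rw [hS, Finset.mem_product, Finset.mem_Icc]; exact ⟨⟨hm2, hmk⟩, Finset.mem_univ _⟩
    have hmemV : ((m, false) : ℕ × Bool) ∈ S := by
      rw [hS, Finset.mem_product, Finset.mem_Icc]; exact ⟨⟨hm2, hmk⟩, Finset.mem_univ _⟩
    constructor
    · rw [hε']; simp only [hmemE, dif_pos]; simp [hf]
    · rw [hV']; simp only [hmemV, dif_pos]; simp [hf]
  have e1 : (fun ω => H (fun q : S => f q ω))
      = fun ω => F (simonIdx ε V ω v) (simonN ε V j k ω) := by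
    funext ω
    rw [hH]
    beta_reduce
    rw [simonIdx_congr ε' V' ε V (fun q : S => f q ω) ω k (hcond ω) v hv,
      simonN_congr ε' V' ε V (fun q : S => f q ω) ω j k (hcond ω)]
  have e2 : (fun ω => G (fun q : T => f q ω))
      = fun ω => if ε (k+1) ω = 1 ∧ V (k+1) ω = v then (1:ℝ) else 0 := by
    funext ω
    rw [hG]
    simp [hf]
  rw [e1, e2] at hcomp
  -- integrability
  have hFmeas : Measurable (fun ω => F (simonIdx ε V ω v) (simonN ε V j k ω)) :=
    (measurable_of_countable (fun ab : ℕ × ℕ => F ab.1 ab.2)).comp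
      ((measurable_simonIdx hεmeas hVmeas v).prodMk (measurable_simonN hεmeas hVmeas j k))
  set M : ℝ := ∑ a ∈ Finset.range (v+1), ∑ b ∈ Finset.range (k+1), |F a b| with hM
  have hFbd : ∀ ω, |F (simonIdx ε V ω v) (simonN ε V j k ω)| ≤ M := by
    intro ω
    have ha : simonIdx ε V ω v ∈ Finset.range (v+1) :=
      Finset.mem_range.mpr (Nat.lt_succ_of_le (simonIdx_le ε V ω v))
    have hb : simonN ε V j k ω ∈ Finset.range (k+1) :=
      Finset.mem_range.mpr (Nat.lt_succ_of_le (simonN_le ε V j k ω))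
    calc |F (simonIdx ε V ω v) (simonN ε V j k ω)|
        ≤ ∑ b ∈ Finset.range (k+1), |F (simonIdx ε V ω v) b| :=
          Finset.single_le_sum (f := fun b => |F (simonIdx ε V ω v) b|)
            (fun b _ => abs_nonneg _) hb
      _ ≤ M := by
          rw [hM]
          exact Finset.single_le_sum (f := fun a => ∑ b ∈ Finset.range (k+1), |F a b|)
            (fun a _ => Finset.sum_nonneg (fun b _ => abs_nonneg _)) ha
  have hFint : Integrable (fun ω => F (simonIdx ε V ω v) (simonN ε V j k ω)) P := by
    apply Integrable.mono' (integrable_const M) hFmeas.aestronglyMeasurable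
    exact Filter.Eventually.of_forall (fun ω => by rw [Real.norm_eq_abs]; exact hFbd ω)
  have hsetmeas : MeasurableSet {ω | ε (k+1) ω = 1 ∧ V (k+1) ω = v} := by
    have h1 : MeasurableSet {ω | ε (k+1) ω = 1} := hεmeas (k+1) (measurableSet_singleton 1)
    have h2 : MeasurableSet {ω | V (k+1) ω = v} := hVmeas (k+1) (measurableSet_singleton v)
    exact h1.inter h2
  have hchimeas : Measurable (fun ω => if ε (k+1) ω = 1 ∧ V (k+1) ω = v then (1:ℝ) else 0) :=
    Measurable.ite hsetmeas measurable_const measurable_const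
  have hchiint : Integrable (fun ω => if ε (k+1) ω = 1 ∧ V (k+1) ω = v then (1:ℝ) else 0) P := by
    apply Integrable.mono' (integrable_const 1) hchimeas.aestronglyMeasurable
    apply Filter.Eventually.of_forall
    intro ω
    rw [Real.norm_eq_abs]
    split <;> simp
  have hmul := hcomp.symm.integral_fun_mul_eq_mul_integral hchimeas.aestronglyMeasurable
    hFmeas.aestronglyMeasurable
  have hmul' : ∫ ω, (if ε (k+1) ω = 1 ∧ V (k+1) ω = v then (1:ℝ) else 0)
      * F (simonIdx ε V ω v) (simonN ε V j k ω) ∂P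
      = (∫ ω, (if ε (k+1) ω = 1 ∧ V (k+1) ω = v then (1:ℝ) else 0) ∂P)
        * ∫ ω, F (simonIdx ε V ω v) (simonN ε V j k ω) ∂P := hmul
  rw [hmul']
  -- compute the indicator integral
  have hind : (fun ω => if ε (k+1) ω = 1 ∧ V (k+1) ω = v then (1:ℝ) else 0)
      = Set.indicator {ω | ε (k+1) ω = 1 ∧ V (k+1) ω = v} (1 : Ω → ℝ) := by
    funext ω
    rw [Set.indicator_apply]
    rfl
  have hval : ∫ ω, (if ε (k+1) ω = 1 ∧ V (k+1) ω = v then (1:ℝ) else 0) ∂P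
      = (P {ω | ε (k+1) ω = 1 ∧ V (k+1) ω = v}).toReal := by
    rw [hind, integral_indicator_one hsetmeas]
    rfl
  rw [hval]
  -- split the probability using pairwise independence
  have hpair : IndepFun (f (k+1, true)) (f (k+1, false)) P :=
    hindep.indepFun (by simp)
  have hpair' : IndepFun (ε (k+1)) (V (k+1)) P := by
    have he : f (k+1, true) = ε (k+1) := by funext ω; simp [hf]
    have hv' : f (k+1, false) = V (k+1) := by funext ω; simp [hf]
    rwa [he, hv'] at hpair
  have hsplit : P {ω | ε (k+1) ω = 1 ∧ V (k+1) ω = v}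
      = P {ω | ε (k+1) ω = 1} * P {ω | V (k+1) ω = v} := by
    have := hpair'.measure_inter_preimage_eq_mul {1} {v}
      (measurableSet_singleton 1) (measurableSet_singleton v)
    convert this using 2
    all_goals rfl
  rw [hsplit, ENNReal.toReal_mul]

lemma V_ae {Ω : Type*} [MeasurableSpace Ω] (P : Measure Ω) [IsProbabilityMeasure P]
    (V : ℕ → Ω → ℕ) (hVmeas : ∀ i, Measurable (V i)) (k : ℕ) (hk : 1 ≤ k)
    (hlaw : ∀ v ∈ Finset.Icc 1 k, P {ω | V (k+1) ω = v} = ((k:ℕ):ℝ≥0∞)⁻¹) :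
    ∀ᵐ ω ∂P, 1 ≤ V (k+1) ω ∧ V (k+1) ω ≤ k := by
  set A : Set Ω := ⋃ v ∈ (Finset.Icc 1 k : Finset ℕ), {ω | V (k+1) ω = v} with hA
  have hmeas : ∀ v : ℕ, MeasurableSet {ω | V (k+1) ω = v} :=
    fun v => hVmeas (k+1) (measurableSet_singleton v)
  have hAmeas : MeasurableSet A := by
    apply MeasurableSet.biUnion (Finset.countable_toSet _) (fun v _ => hmeas v)
  have hPA : P A = 1 := by
    rw [hA, measure_biUnion_finset]
    · rw [Finset.sum_congr rfl hlaw, Finset.sum_const, Nat.card_Icc]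
      simp only [Nat.add_sub_cancel, nsmul_eq_mul]
      rw [ENNReal.mul_inv_cancel]
      · exact Nat.cast_ne_zero.mpr (by omega)
      · exact ENNReal.natCast_ne_top k
    · intro v _ w _ hvw
      rw [Function.onFun, Set.disjoint_left]
      intro ω h1 h2
      exact hvw ((h1 : V (k+1) ω = v).symm.trans h2)
    · exact fun v _ => hmeas v
  have hset : {ω | ¬ (1 ≤ V (k+1) ω ∧ V (k+1) ω ≤ k)} = Aᶜ := by
    ext ω
    simp only [hA, Set.mem_setOf_eq, Set.mem_compl_iff, Set.mem_iUnion, Finset.mem_coe,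
      Finset.mem_Icc, not_exists, Set.mem_setOf_eq]
    constructor
    · intro h v hv hcon
      exact h (hcon ▸ hv)
    · intro h hcon
      exact h (V (k+1) ω) hcon rfl
  rw [ae_iff, hset, measure_compl hAmeas (by simp), hPA, measure_univ, tsub_self]

lemma integrable_phiN {Ω : Type*} [MeasurableSpace Ω] (P : Measure Ω) [IsProbabilityMeasure P]
    {ε V : ℕ → Ω → ℕ} (hεmeas : ∀ i, Measurable (ε i)) (hVmeas : ∀ i, Measurable (V i))
    (j k : ℕ) (φ : ℕ → ℝ) :
    Integrable (fun ω => φ (simonN ε V j k ω)) P := by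
  have hmeas : Measurable fun ω => φ (simonN ε V j k ω) :=
    (measurable_of_countable φ).comp (measurable_simonN hεmeas hVmeas j k)
  apply Integrable.mono' (integrable_const (∑ b ∈ Finset.range (k+1), |φ b|))
    hmeas.aestronglyMeasurable
  apply Filter.Eventually.of_forall
  intro ω
  rw [Real.norm_eq_abs]
  exact Finset.single_le_sum (f := fun b => |φ b|) (fun b _ => abs_nonneg _)
    (Finset.mem_range.mpr (Nat.lt_succ_of_le (simonN_le ε V j k ω)))

lemma integrable_idxN {Ω : Type*} [MeasurableSpace Ω] (P : Measure Ω) [IsProbabilityMeasure P]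
    {ε V : ℕ → Ω → ℕ} (hεmeas : ∀ i, Measurable (ε i)) (hVmeas : ∀ i, Measurable (V i))
    (v j k : ℕ) (F : ℕ → ℕ → ℝ) :
    Integrable (fun ω => F (simonIdx ε V ω v) (simonN ε V j k ω)) P := by
  have hmeas : Measurable (fun ω => F (simonIdx ε V ω v) (simonN ε V j k ω)) :=
    (measurable_of_countable (fun ab : ℕ × ℕ => F ab.1 ab.2)).comp
      ((measurable_simonIdx hεmeas hVmeas v).prodMk (measurable_simonN hεmeas hVmeas j k))
  apply Integrable.mono'
    (integrable_const (∑ a ∈ Finset.range (v+1), ∑ b ∈ Finset.range (k+1), |F a b|))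
    hmeas.aestronglyMeasurable
  apply Filter.Eventually.of_forall
  intro ω
  rw [Real.norm_eq_abs]
  have ha : simonIdx ε V ω v ∈ Finset.range (v+1) :=
    Finset.mem_range.mpr (Nat.lt_succ_of_le (simonIdx_le ε V ω v))
  have hb : simonN ε V j k ω ∈ Finset.range (k+1) :=
    Finset.mem_range.mpr (Nat.lt_succ_of_le (simonN_le ε V j k ω))
  calc |F (simonIdx ε V ω v) (simonN ε V j k ω)|
      ≤ ∑ b ∈ Finset.range (k+1), |F (simonIdx ε V ω v) b| :=
        Finset.single_le_sum (f := fun b => |F (simonIdx ε V ω v) b|)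
          (fun b _ => abs_nonneg _) hb
    _ ≤ _ := Finset.single_le_sum (f := fun a => ∑ b ∈ Finset.range (k+1), |F a b|)
          (fun a _ => Finset.sum_nonneg (fun b _ => abs_nonneg _)) ha

lemma step_expect {Ω : Type*} [MeasurableSpace Ω] (P : Measure Ω) [IsProbabilityMeasure P]
    (p : ℝ) (hp0 : 0 ≤ p)
    (ε V : ℕ → Ω → ℕ) (hεmeas : ∀ i, Measurable (ε i)) (hVmeas : ∀ i, Measurable (V i))
    (hεval : ∀ i ω, ε i ω ≤ 1)
    (hεlaw : ∀ i, 2 ≤ i → P {ω | ε i ω = 1} = ENNReal.ofReal p)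
    (hVlaw : ∀ i, 2 ≤ i → ∀ j ∈ Finset.Icc 1 (i - 1),
      P {ω | V i ω = j} = ((i - 1 : ℕ) : ℝ≥0∞)⁻¹)
    (hindep : iIndepFun
      (fun (q : ℕ × Bool) ω => if q.2 then ε q.1 ω else V q.1 ω) P)
    (γ : ℝ) (j k : ℕ) (hj : 1 ≤ j) (hk : j ≤ k) :
    ∫ ω, ((simonN ε V j (k+1) ω : ℝ))^γ ∂P
      = ∫ ω, ((simonN ε V j k ω : ℝ))^γ ∂P
        + p * ((k:ℝ))⁻¹ * ∫ ω, (simonN ε V j k ω : ℝ) *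
            (((simonN ε V j k ω : ℝ)+1)^γ - (simonN ε V j k ω : ℝ)^γ) ∂P := by
  have hk1 : 1 ≤ k := le_trans hj hk
  set F : ℕ → ℕ → ℝ := fun a b => (if a = j then (1:ℝ) else 0) * (((b:ℝ)+1)^γ - (b:ℝ)^γ)
    with hF
  have hlawk : ∀ v ∈ Finset.Icc 1 k, P {ω | V (k+1) ω = v} = ((k:ℕ):ℝ≥0∞)⁻¹ := by
    intro v hv
    have := hVlaw (k+1) (by omega) v (by simpa using hv)
    simpa using this
  have hae := V_ae P V hVmeas k hk1 hlawk
  -- pointwise identity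
  have hpt : ∀ᵐ ω ∂P, ((simonN ε V j (k+1) ω : ℝ))^γ
      = ((simonN ε V j k ω : ℝ))^γ + ∑ v ∈ Finset.Icc 1 k,
          (if ε (k+1) ω = 1 ∧ V (k+1) ω = v then (1:ℝ) else 0)
            * F (simonIdx ε V ω v) (simonN ε V j k ω) := by
    filter_upwards [hae] with ω hω
    obtain ⟨h1, h2⟩ := hω
    have hstep := simonN_succ ε V j k hj hk ω h1 h2
    have hsum : ∑ v ∈ Finset.Icc 1 k,
        (if ε (k+1) ω = 1 ∧ V (k+1) ω = v then (1:ℝ) else 0)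
          * F (simonIdx ε V ω v) (simonN ε V j k ω)
        = (if ε (k+1) ω = 1 ∧ simonIdx ε V ω (V (k+1) ω) = j then (1:ℝ) else 0)
            * (((simonN ε V j k ω : ℝ)+1)^γ - (simonN ε V j k ω : ℝ)^γ) := by
      rw [Finset.sum_eq_single (V (k+1) ω)]
      · by_cases hε1 : ε (k+1) ω = 1
        · by_cases hI : simonIdx ε V ω (V (k+1) ω) = j
          · rw [if_pos ⟨hε1, rfl⟩, if_pos ⟨hε1, hI⟩, hF]
            simp [hI]
          · rw [if_pos ⟨hε1, rfl⟩, if_neg (fun hcon => hI hcon.2), hF]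
            simp [hI]
        · rw [if_neg (fun hcon => hε1 hcon.1), if_neg (fun hcon => hε1 hcon.1)]
          ring
      · intro v _ hne
        rw [if_neg (fun hcon => hne hcon.2.symm)]
        ring
      · intro hmem
        exact absurd (Finset.mem_Icc.mpr ⟨h1, h2⟩) hmem
    rw [hsum]
    by_cases hcond : ε (k+1) ω = 1 ∧ simonIdx ε V ω (V (k+1) ω) = j
    · have hne : ε (k+1) ω ≠ 0 := by rw [hcond.1]; omega
      rw [if_pos ⟨hne, hcond.2⟩] at hstep
      rw [hstep, if_pos hcond]
      push_cast
      ring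
    · have hneg : ¬(ε (k+1) ω ≠ 0 ∧ simonIdx ε V ω (V (k+1) ω) = j) := by
        rintro ⟨hne, hI⟩
        have := hεval (k+1) ω
        exact hcond ⟨by omega, hI⟩
      rw [if_neg hneg, add_zero] at hstep
      rw [hstep, if_neg hcond]
      ring
  -- integrability of the summands
  have hchimeas : ∀ v : ℕ, Measurable
      (fun ω => if ε (k+1) ω = 1 ∧ V (k+1) ω = v then (1:ℝ) else 0) := by
    intro v
    exact Measurable.ite ((hεmeas (k+1) (measurableSet_singleton 1)).inter
      (hVmeas (k+1) (measurableSet_singleton v))) measurable_const measurable_const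
  have hterm_int : ∀ v : ℕ, Integrable (fun ω =>
      (if ε (k+1) ω = 1 ∧ V (k+1) ω = v then (1:ℝ) else 0)
        * F (simonIdx ε V ω v) (simonN ε V j k ω)) P := by
    intro v
    exact (integrable_idxN P hεmeas hVmeas v j k F).bdd_mul
      (hchimeas v).aestronglyMeasurable
      (c := 1) (Filter.Eventually.of_forall fun ω => by rw [Real.norm_eq_abs]; split <;> simp)
  rw [integral_congr_ae hpt, integral_add
    (integrable_phiN P hεmeas hVmeas j k (fun m => (m:ℝ)^γ))
    (integrable_finset_sum _ (fun v _ => hterm_int v))]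
  congr 1
  rw [integral_finset_sum _ (fun v _ => hterm_int v)]
  have hterm : ∀ v ∈ Finset.Icc 1 k, ∫ ω,
      (if ε (k+1) ω = 1 ∧ V (k+1) ω = v then (1:ℝ) else 0)
        * F (simonIdx ε V ω v) (simonN ε V j k ω) ∂P
      = p * ((k:ℝ))⁻¹ * ∫ ω, F (simonIdx ε V ω v) (simonN ε V j k ω) ∂P := by
    intro v hv
    rw [indep_step P ε V hεmeas hVmeas hindep k v j hk1 (Finset.mem_Icc.mp hv).2 F]
    have he : (P {ω | ε (k+1) ω = 1}).toReal = p := by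
      rw [hεlaw (k+1) (by omega), ENNReal.toReal_ofReal hp0]
    have hvv : (P {ω | V (k+1) ω = v}).toReal = ((k:ℝ))⁻¹ := by
      rw [hlawk v hv, ENNReal.toReal_inv, ENNReal.toReal_natCast]
    rw [he, hvv]
  rw [Finset.sum_congr rfl hterm, ← Finset.mul_sum]
  congr 1
  rw [← integral_finset_sum _ (fun v _ => integrable_idxN P hεmeas hVmeas v j k F)]
  apply integral_congr_ae
  apply Filter.Eventually.of_forall
  intro ω
  have hcard : ((simonN ε V j k ω : ℕ) : ℝ)
      = ∑ v ∈ Finset.Icc 1 k, (if simonIdx ε V ω v = j then (1:ℝ) else 0) := by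
    rw [show simonN ε V j k ω = ∑ v ∈ Finset.Icc 1 k,
      (if simonIdx ε V ω v = j then 1 else 0) from Finset.card_filter _ _]
    push_cast
    rfl
  rw [hF]
  simp only []
  rw [← Finset.sum_mul, ← hcard]
/-- Convexity inequality: for `0 < a ≤ b` and `q ≥ 1`, `b^q - a^q ≤ q (b-a) b^(q-1)`. -/
lemma rpow_convex_ineq {a b q : ℝ} (ha : 0 < a) (hab : a ≤ b) (hq : 1 ≤ q) :
    b ^ q - a ^ q ≤ q * (b - a) * b ^ (q - 1) := by
  have hb : 0 < b := lt_of_lt_of_le ha hab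
  have hs : (-1 : ℝ) ≤ a / b - 1 := by
    have : 0 ≤ a / b := le_of_lt (div_pos ha hb); linarith
  have h1 := one_add_mul_self_le_rpow_one_add hs hq
  rw [show 1 + (a/b - 1) = a/b by ring, Real.div_rpow ha.le hb.le] at h1
  have hbq : (0:ℝ) < b ^ q := Real.rpow_pos_of_pos hb q
  have h2 : (1 + q * (a / b - 1)) * b ^ q ≤ a ^ q := by
    have := mul_le_mul_of_nonneg_right h1 hbq.le
    rwa [div_mul_cancel₀ _ hbq.ne'] at this
  have h3 : b ^ (q-1) = b ^ q / b := Real.rpow_sub_one hb.ne' q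
  have e1 : (1 + q * (a / b - 1)) * b ^ q = b ^ q + q * (a - b) * (b ^ q / b) := by
    field_simp
  rw [h3]
  have e2 : q * (b - a) * (b ^ q / b) = -(q * (a - b) * (b ^ q / b)) := by ring
  rw [e2]
  linarith [e1 ▸ h2]

lemma key1 {γ : ℝ} (hγ : 1 < γ) (m : ℕ) :
    (m:ℝ) * (((m:ℝ)+1)^γ - (m:ℝ)^γ) ≤ γ * (m:ℝ)^γ + γ^2 * 2^(γ-1) * (m:ℝ)^(γ-1) := by
  rcases Nat.eq_zero_or_pos m with rfl | hm
  · have h1 : (0:ℝ)^γ = 0 := Real.zero_rpow (by linarith)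
    have h2 : (0:ℝ)^(γ-1) = 0 := Real.zero_rpow (by intro h; rw [sub_eq_zero] at h; linarith)
    simp [h1, h2]
  · set t := (m:ℝ) with hts
    have ht : 1 ≤ t := by rw [hts]; exact_mod_cast hm
    have ht0 : 0 < t := by linarith
    have h1 : (t+1)^γ - t^γ ≤ γ * (t+1)^(γ-1) := by
      have := rpow_convex_ineq ht0 (by linarith : t ≤ t+1) hγ.le
      rw [show t+1-t = 1 by ring] at this
      linarith
    have hb1 : (1:ℝ) ≤ 1 + 1/t := by
      have : 0 < 1/t := by positivity
      linarith
    have h2 := rpow_convex_ineq one_pos hb1 hγ.le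
    have h2' : (1+1/t)^(γ-1) ≤ 2^(γ-1) := by
      apply Real.rpow_le_rpow (by positivity) _ (by linarith)
      have : 1/t ≤ 1 := by
        rw [div_le_one ht0]; exact ht
      linarith
    have h3 : (1+1/t)^γ ≤ 1 + γ*(1/t)*2^(γ-1) := by
      have hc : γ * ((1+1/t)-1) * (1+1/t)^(γ-1) ≤ γ*(1/t)*2^(γ-1) := by
        rw [show (1:ℝ)+1/t-1 = 1/t by ring]
        have hpos : (0:ℝ) ≤ γ * (1/t) := by positivity
        calc γ * (1/t) * (1+1/t)^(γ-1) ≤ γ * (1/t) * 2^(γ-1) :=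
          mul_le_mul_of_nonneg_left h2' hpos
          _ = γ*(1/t)*2^(γ-1) := by ring
      have h1pow : (1:ℝ)^γ = 1 := Real.one_rpow γ
      rw [h1pow] at h2
      linarith
    have h4 : (t+1)^(γ-1) = t^(γ-1) * (1+1/t)^(γ-1) := by
      rw [show t+1 = t * (1+1/t) by field_simp, Real.mul_rpow ht0.le (by positivity)]
    have h5 : (1+1/t)^(γ-1) ≤ (1+1/t)^γ := Real.rpow_le_rpow_of_exponent_le hb1 (by linarith)
    have htpow : (0:ℝ) < t^(γ-1) := Real.rpow_pos_of_pos ht0 _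
    have h6 : (t+1)^(γ-1) ≤ t^(γ-1) * (1 + γ*(1/t)*2^(γ-1)) := by
      rw [h4]; exact mul_le_mul_of_nonneg_left (le_trans h5 h3) htpow.le
    have hid : t * t^(γ-1) = t^γ := by
      have := (Real.rpow_add ht0 1 (γ-1)).symm
      rw [Real.rpow_one] at this
      rw [this, show (1:ℝ) + (γ-1) = γ by ring]
    have hid2 : t^γ * (1/t) = t^(γ-1) := by
      rw [Real.rpow_sub_one ht0.ne' γ]
      field_simp
    have hg0 : (0:ℝ) ≤ (t+1)^γ - t^γ := by
      have : t^γ ≤ (t+1)^γ := Real.rpow_le_rpow ht0.le (by linarith) (by linarith)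
      linarith
    calc t * ((t+1)^γ - t^γ) ≤ t * (γ * (t+1)^(γ-1)) := by
          apply mul_le_mul_of_nonneg_left h1 ht0.le
      _ = γ * t * (t+1)^(γ-1) := by ring
      _ ≤ γ * t * (t^(γ-1) * (1 + γ*(1/t)*2^(γ-1))) := by
          apply mul_le_mul_of_nonneg_left h6 (by positivity)
      _ = γ * (t * t^(γ-1)) + γ^2 * 2^(γ-1) * (t * t^(γ-1) * (1/t)) := by ring
      _ = γ * t^γ + γ^2 * 2^(γ-1) * t^(γ-1) := by rw [hid, hid2]

lemma key2 {γ δ t : ℝ} (hγ : 1 < γ) (hδ : 0 < δ) (ht : 0 ≤ t) :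
    t^(γ-1) ≤ δ * t^γ + (1/δ)^(γ-1) := by
  rcases le_or_gt t (1/δ) with h | h
  · have h1 : t^(γ-1) ≤ (1/δ)^(γ-1) := Real.rpow_le_rpow ht h (by linarith)
    have h2 : (0:ℝ) ≤ δ * t^γ := by positivity
    linarith
  · have ht0 : 0 < t := lt_trans (by positivity) h
    have he : t^(γ-1) = t^γ * (1/t) := by
      rw [Real.rpow_sub_one ht0.ne' γ]; field_simp
    have hinv : 1/t ≤ δ := by
      rw [div_le_iff₀ ht0]
      have := (div_lt_iff₀ hδ).mp h
      linarith [mul_comm δ t ▸ this]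
    have hpos : (0:ℝ) ≤ t^γ := (Real.rpow_pos_of_pos ht0 γ).le
    have h2 : t^γ * (1/t) ≤ t^γ * δ := mul_le_mul_of_nonneg_left hinv hpos
    have h3 : (0:ℝ) ≤ (1/δ)^(γ-1) := Real.rpow_nonneg (by positivity) _
    rw [he]
    linarith [h2]
lemma log_ineq_aux (n : ℕ) (hn : 2 ≤ n) :
    (1:ℝ)/n ≤ Real.log n - Real.log ((n:ℝ)-1) := by
  have hn1 : (2:ℝ) ≤ (n:ℝ) := by exact_mod_cast hn
  have hpos : (0:ℝ) < (n:ℝ) - 1 := by linarith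
  have hnpos : (0:ℝ) < (n:ℝ) := by linarith
  have h1 : (1:ℝ) - 1/n ≤ Real.exp (-(1/n)) := by
    have := Real.add_one_le_exp (-(1/(n:ℝ)))
    linarith
  have hfrac : (0:ℝ) < 1 - 1/n := by
    have : (1:ℝ)/n < 1 := by
      rw [div_lt_one hnpos]; linarith
    linarith
  have h2 : Real.log (1 - 1/n) ≤ -(1/n) := by
    calc Real.log (1 - 1/n) ≤ Real.log (Real.exp (-(1/n))) :=
          Real.log_le_log hfrac h1
      _ = -(1/n) := Real.log_exp _
  have hsplit : (n:ℝ) - 1 = (n:ℝ) * (1 - 1/n) := by field_simp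
  have h3 : Real.log ((n:ℝ)-1) = Real.log n + Real.log (1 - 1/n) := by
    rw [hsplit, Real.log_mul hnpos.ne' hfrac.ne']
  linarith

lemma sum_inv_le {j n : ℕ} (hj : 1 ≤ j) (hjn : j ≤ n) :
    ∑ k ∈ Finset.Ico j n, (1:ℝ)/k ≤ 1 + Real.log n - Real.log j := by
  have hjpos : (0:ℝ) < j := by exact_mod_cast hj
  rcases Nat.eq_or_lt_of_le hjn with rfl | hlt
  · simp only [Finset.Ico_self, Finset.sum_empty]
    linarith
  · -- n ≥ j + 1
    have main : ∀ n, j + 1 ≤ n → ∑ k ∈ Finset.Ico j n, (1:ℝ)/k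
        ≤ 1/j + Real.log ((n:ℝ)-1) - Real.log j := by
      intro n hn
      induction n, hn using Nat.le_induction with
      | base =>
          rw [show j + 1 = j + 1 from rfl, Finset.sum_Ico_succ_top (le_refl j),
            Finset.Ico_self, Finset.sum_empty, zero_add]
          simp
      | succ n hn ih =>
          rw [Finset.sum_Ico_succ_top (by omega)]
          have hn2 : 2 ≤ n := by omega
          have := log_ineq_aux n hn2
          have hcast : ((n+1:ℕ):ℝ) - 1 = (n:ℝ) := by push_cast; ring
          rw [hcast]
          linarith
    have h := main n hlt
    have hlog : Real.log ((n:ℝ)-1) ≤ Real.log n := by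
      have hjr : (1:ℝ) ≤ (j:ℝ) := by exact_mod_cast hj
      have hltr : (j:ℝ) < (n:ℝ) := by exact_mod_cast hlt
      apply Real.log_le_log (by linarith)
      linarith
    have hinvj : (1:ℝ)/j ≤ 1 := by
      rw [div_le_one hjpos]; exact_mod_cast hj
    linarith

lemma gronwall_prod {x : ℕ → ℝ} {η D : ℝ} (hη : 0 < η) (hD : 0 ≤ D) (j : ℕ) (hj : 1 ≤ j)
    (hbase : x j ≤ 1)
    (hstep : ∀ k, j ≤ k → x (k+1) ≤ (1+η/k) * x k + D/k) :
    ∀ n, j ≤ n → x n + D/η ≤ (1 + D/η) * ∏ k ∈ Finset.Ico j n, (1+η/(k:ℝ)) := by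
  intro n hn
  induction n, hn using Nat.le_induction with
  | base =>
      rw [Finset.Ico_self, Finset.prod_empty, mul_one]
      linarith
  | succ n hn ih =>
      have hnpos : (0:ℝ) < n := by
        have : 1 ≤ n := le_trans hj hn
        exact_mod_cast this
      have hfac : (0:ℝ) ≤ 1 + η/n := by positivity
      have hDk : D/η + D/(n:ℝ) = (1+η/n) * (D/η) := by
        field_simp
      calc x (n+1) + D/η ≤ (1+η/n) * x n + D/n + D/η := by linarith [hstep n hn]
        _ = (1+η/n) * (x n + D/η) := by
            rw [mul_add, ← hDk]; ring
        _ ≤ (1+η/n) * ((1 + D/η) * ∏ k ∈ Finset.Ico j n, (1+η/(k:ℝ))) :=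
            mul_le_mul_of_nonneg_left ih hfac
        _ = (1 + D/η) * ∏ k ∈ Finset.Ico j (n+1), (1+η/(k:ℝ)) := by
            rw [Finset.prod_Ico_succ_top hn]; ring

lemma prod_le_exp {η : ℝ} (hη : 0 < η) (j n : ℕ) (hj : 1 ≤ j) (hjn : j ≤ n) :
    ∏ k ∈ Finset.Ico j n, (1+η/(k:ℝ)) ≤ Real.exp η * ((n:ℝ)/(j:ℝ))^η := by
  have hjpos : (0:ℝ) < j := by exact_mod_cast hj
  have hnpos : (0:ℝ) < n := by exact_mod_cast (le_trans hj hjn)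
  have h1 : ∏ k ∈ Finset.Ico j n, (1+η/(k:ℝ))
      ≤ ∏ k ∈ Finset.Ico j n, Real.exp (η/(k:ℝ)) := by
    apply Finset.prod_le_prod
    · intro k hk
      have : (1:ℝ) ≤ k := by exact_mod_cast le_trans hj (Finset.mem_Ico.mp hk).1
      positivity
    · intro k hk
      have := Real.add_one_le_exp (η/(k:ℝ))
      linarith
  have h2 : ∏ k ∈ Finset.Ico j n, Real.exp (η/(k:ℝ))
      = Real.exp (∑ k ∈ Finset.Ico j n, η/(k:ℝ)) := (Real.exp_sum _ _).symm
  have h3 : ∑ k ∈ Finset.Ico j n, η/(k:ℝ) = η * ∑ k ∈ Finset.Ico j n, (1:ℝ)/k := by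
    rw [Finset.mul_sum]; congr 1; funext k; ring
  have h4 := sum_inv_le hj hjn
  have h5 : ∑ k ∈ Finset.Ico j n, η/(k:ℝ) ≤ η * (1 + Real.log n - Real.log j) := by
    rw [h3]
    exact mul_le_mul_of_nonneg_left h4 hη.le
  have h6 : Real.exp (η * (1 + Real.log n - Real.log j))
      = Real.exp η * ((n:ℝ)/(j:ℝ))^η := by
    rw [Real.rpow_def_of_pos (by positivity : (0:ℝ) < (n:ℝ)/(j:ℝ)),
      Real.log_div hnpos.ne' hjpos.ne', ← Real.exp_add]
    congr 1
    ring
  calc ∏ k ∈ Finset.Ico j n, (1+η/(k:ℝ)) ≤ Real.exp (∑ k ∈ Finset.Ico j n, η/(k:ℝ)) := by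
        rw [← h2]; exact h1
    _ ≤ Real.exp (η * (1 + Real.log n - Real.log j)) := Real.exp_le_exp.mpr h5
    _ = Real.exp η * ((n:ℝ)/(j:ℝ))^η := h6

lemma step_bound {Ω : Type*} [MeasurableSpace Ω] (P : Measure Ω) [IsProbabilityMeasure P]
    (p : ℝ) (hp0 : 0 ≤ p)
    (ε V : ℕ → Ω → ℕ) (hεmeas : ∀ i, Measurable (ε i)) (hVmeas : ∀ i, Measurable (V i))
    (hεval : ∀ i ω, ε i ω ≤ 1)
    (hεlaw : ∀ i, 2 ≤ i → P {ω | ε i ω = 1} = ENNReal.ofReal p)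
    (hVlaw : ∀ i, 2 ≤ i → ∀ j ∈ Finset.Icc 1 (i - 1),
      P {ω | V i ω = j} = ((i - 1 : ℕ) : ℝ≥0∞)⁻¹)
    (hindep : iIndepFun
      (fun (q : ℕ × Bool) ω => if q.2 then ε q.1 ω else V q.1 ω) P)
    (γ : ℝ) (hγ : 1 < γ) (δ : ℝ) (hδ : 0 < δ) (j k : ℕ) (hj : 1 ≤ j) (hk : j ≤ k) :
    ∫ ω, ((simonN ε V j (k+1) ω : ℝ))^γ ∂P
      ≤ (1 + (p*(γ + γ^2*2^(γ-1)*δ))/(k:ℝ)) * ∫ ω, ((simonN ε V j k ω : ℝ))^γ ∂P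
        + (p*(γ^2*2^(γ-1)*(1/δ)^(γ-1)))/(k:ℝ) := by
  have hkr : (1:ℝ) ≤ (k:ℝ) := by exact_mod_cast le_trans hj hk
  have hkpos : (0:ℝ) < k := by linarith
  have hc0 : (0:ℝ) ≤ γ^2*2^(γ-1) := by positivity
  have hC0 : (0:ℝ) ≤ (1/δ)^(γ-1) := Real.rpow_nonneg (by positivity) _
  rw [step_expect P p hp0 ε V hεmeas hVmeas hεval hεlaw hVlaw hindep γ j k hj hk]
  have b1 : ∫ ω, (simonN ε V j k ω : ℝ) *
        (((simonN ε V j k ω : ℝ)+1)^γ - (simonN ε V j k ω : ℝ)^γ) ∂P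
      ≤ ∫ ω, (γ * ((simonN ε V j k ω : ℝ))^γ
          + γ^2*2^(γ-1) * ((simonN ε V j k ω : ℝ))^(γ-1)) ∂P := by
    apply integral_mono
      (integrable_phiN P hεmeas hVmeas j k
        (fun m => (m:ℝ) * (((m:ℝ)+1)^γ - (m:ℝ)^γ)))
      (integrable_phiN P hεmeas hVmeas j k
        (fun m => γ * ((m:ℝ))^γ + γ^2*2^(γ-1) * ((m:ℝ))^(γ-1)))
    intro ω
    exact key1 hγ (simonN ε V j k ω)
  have b2 : ∫ ω, ((simonN ε V j k ω : ℝ))^(γ-1) ∂P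
      ≤ δ * ∫ ω, ((simonN ε V j k ω : ℝ))^γ ∂P + (1/δ)^(γ-1) := by
    have hmono := integral_mono
      (integrable_phiN P hεmeas hVmeas j k (fun m => ((m:ℝ))^(γ-1)))
      (integrable_phiN P hεmeas hVmeas j k (fun m => δ * ((m:ℝ))^γ + (1/δ)^(γ-1)))
      (fun ω => key2 hγ hδ (Nat.cast_nonneg (simonN ε V j k ω)))
    rwa [integral_add ((integrable_phiN P hεmeas hVmeas j k
        (fun m => ((m:ℝ))^γ)).const_mul δ) (integrable_const _),
      integral_const_mul, integral_const, probReal_univ, one_smul] at hmono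
  have b3 : ∫ ω, (γ * ((simonN ε V j k ω : ℝ))^γ
          + γ^2*2^(γ-1) * ((simonN ε V j k ω : ℝ))^(γ-1)) ∂P
      = γ * (∫ ω, ((simonN ε V j k ω : ℝ))^γ ∂P)
        + γ^2*2^(γ-1) * ∫ ω, ((simonN ε V j k ω : ℝ))^(γ-1) ∂P := by
    rw [integral_add ((integrable_phiN P hεmeas hVmeas j k
        (fun m => ((m:ℝ))^γ)).const_mul γ)
      ((integrable_phiN P hεmeas hVmeas j k
        (fun m => ((m:ℝ))^(γ-1))).const_mul (γ^2*2^(γ-1))),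
      integral_const_mul, integral_const_mul]
  have hpk : (0:ℝ) ≤ p * (k:ℝ)⁻¹ := by positivity
  have hEg : ∫ ω, (simonN ε V j k ω : ℝ) *
        (((simonN ε V j k ω : ℝ)+1)^γ - (simonN ε V j k ω : ℝ)^γ) ∂P
      ≤ γ * (∫ ω, ((simonN ε V j k ω : ℝ))^γ ∂P)
        + γ^2*2^(γ-1) * (δ * (∫ ω, ((simonN ε V j k ω : ℝ))^γ ∂P) + (1/δ)^(γ-1)) := by
    calc _ ≤ _ := b1
      _ = _ := b3
      _ ≤ _ := by
        have := mul_le_mul_of_nonneg_left b2 hc0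
        linarith
  have hfinal := mul_le_mul_of_nonneg_left hEg hpk
  have heq : (1 + (p*(γ + γ^2*2^(γ-1)*δ))/(k:ℝ)) * (∫ ω, ((simonN ε V j k ω : ℝ))^γ ∂P)
        + (p*(γ^2*2^(γ-1)*(1/δ)^(γ-1)))/(k:ℝ)
      = (∫ ω, ((simonN ε V j k ω : ℝ))^γ ∂P)
        + p * (k:ℝ)⁻¹ * (γ * (∫ ω, ((simonN ε V j k ω : ℝ))^γ ∂P)
          + γ^2*2^(γ-1) * (δ * (∫ ω, ((simonN ε V j k ω : ℝ))^γ ∂P) + (1/δ)^(γ-1))) := by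
    field_simp
    ring
  rw [heq]
  linarith

/-- In Simon's reinforcement model with memory parameter `p ∈ (0,1)`: for every
`γ ∈ (1, 1/p)` there exist constants `c = c(γ,p) > 0` and `η = η(γ,p) ∈ (0,1)` such that
`E[N_j(n)^γ] ≤ c·(n/j)^η` for all integers `1 ≤ j ≤ n`. -/
theorem simon_counting_moment_bound
    {Ω : Type*} [MeasurableSpace Ω] (P : Measure Ω) [IsProbabilityMeasure P]
    (p : ℝ) (hp : p ∈ Set.Ioo (0 : ℝ) 1)
    (ε V : ℕ → Ω → ℕ) (hεmeas : ∀ i, Measurable (ε i)) (hVmeas : ∀ i, Measurable (V i))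
    (hε1 : ∀ ω, ε 1 ω = 0) (hεval : ∀ i ω, ε i ω ≤ 1)
    (hεlaw : ∀ i, 2 ≤ i → P {ω | ε i ω = 1} = ENNReal.ofReal p)
    (hVlaw : ∀ i, 2 ≤ i → ∀ j ∈ Finset.Icc 1 (i - 1),
      P {ω | V i ω = j} = ((i - 1 : ℕ) : ℝ≥0∞)⁻¹)
    (hindep : iIndepFun
      (fun (q : ℕ × Bool) ω => if q.2 then ε q.1 ω else V q.1 ω) P)
    (γ : ℝ) (hγ : γ ∈ Set.Ioo 1 (1 / p)) :
    ∃ c : ℝ, 0 < c ∧ ∃ η : ℝ, η ∈ Set.Ioo (0 : ℝ) 1 ∧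
      ∀ j n : ℕ, 1 ≤ j → j ≤ n →
        ∫ ω, (simonN ε V j n ω : ℝ) ^ γ ∂P ≤ c * ((n : ℝ) / (j : ℝ)) ^ η := by
  obtain ⟨hp0, hp1⟩ := hp
  obtain ⟨hγ1, hγ2⟩ := hγ
  have hγ0 : (0:ℝ) < γ := by linarith
  have hγp : γ * p < 1 := by
    have := (lt_div_iff₀ hp0).mp hγ2
    linarith
  have hγp0 : (0:ℝ) < γ * p := by positivity
  have hA0 : (0:ℝ) < γ^2 * 2^(γ-1) := by positivity
  set η : ℝ := (1 + γ*p)/2 with hηdef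
  have hη0 : (0:ℝ) < η := by rw [hηdef]; positivity
  have hη1 : η < 1 := by rw [hηdef]; linarith
  have hηγp : γ*p < η := by rw [hηdef]; linarith
  set δ : ℝ := (η - γ*p)/(p*(γ^2 * 2^(γ-1))) with hδdef
  have hδ0 : (0:ℝ) < δ := by
    rw [hδdef]
    apply div_pos (by linarith) (by positivity)
  set D : ℝ := p*(γ^2*2^(γ-1)*(1/δ)^(γ-1)) with hDdef
  have hD0 : (0:ℝ) < D := by
    rw [hDdef]
    have : (0:ℝ) < (1/δ)^(γ-1) := Real.rpow_pos_of_pos (by positivity) _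
    positivity
  have hkey : p*(γ + γ^2*2^(γ-1)*δ) = η := by
    rw [hδdef]
    field_simp
    ring
  refine ⟨(1 + D/η) * Real.exp η, by positivity, η, ⟨hη0, hη1⟩, ?_⟩
  intro j n hj hn
  set x : ℕ → ℝ := fun m => ∫ ω, ((simonN ε V j m ω : ℝ))^γ ∂P with hx
  have hbase : x j ≤ 1 := by
    have hple : ∀ ω, ((simonN ε V j j ω : ℝ))^γ ≤ 1 := by
      intro ω
      apply Real.rpow_le_one (Nat.cast_nonneg _) _ hγ0.le
      exact_mod_cast simonN_self_le_one ε V j hj ω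
    calc x j ≤ (∫ _ω, (1:ℝ) ∂P) := by
          exact integral_mono (integrable_phiN P hεmeas hVmeas j j (fun m => (m:ℝ)^γ))
            (integrable_const 1) hple
      _ = 1 := by simp
  have hstep : ∀ k, j ≤ k → x (k+1) ≤ (1+η/(k:ℝ)) * x k + D/(k:ℝ) := by
    intro k hk
    have h := step_bound P p hp0.le ε V hεmeas hVmeas hεval hεlaw hVlaw hindep γ hγ1
      δ hδ0 j k hj hk
    rw [hkey] at h
    rw [← hDdef] at h
    exact h
  have hg := gronwall_prod hη0 hD0.le j hj hbase hstep n hn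
  have hpe := prod_le_exp hη0 j n hj hn
  have h1 : x n ≤ (1 + D/η) * ∏ k ∈ Finset.Ico j n, (1+η/(k:ℝ)) := by
    have : (0:ℝ) ≤ D/η := by positivity
    linarith
  show x n ≤ (1 + D/η) * Real.exp η * ((n:ℝ)/(j:ℝ))^η
  calc x n ≤ (1 + D/η) * ∏ k ∈ Finset.Ico j n, (1+η/(k:ℝ)) := h1
    _ ≤ (1 + D/η) * (Real.exp η * ((n:ℝ)/(j:ℝ))^η) := by
        apply mul_le_mul_of_nonneg_left hpe (by positivity)
    _ = (1 + D/η) * Real.exp η * ((n:ℝ)/(j:ℝ))^η := by ring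
end
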